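/- Let {Ψₙ} be as above (Gram–Schmidt of {k^{n−1}e^k} in L²(a,b)) and define the N×N matrix S with entries s_{mn} = ∫ₐᵇ Ψₙ'(k)Ψₘ(k) dk. Then s_{mn} = 0 for m > n and s_{nn} = 1 for all n; hence S is upper triangular with unit diagonal and invertible with det S = 1. -/

import Mathlib

open MeasureTheory

open Polynomial in
lemma rep_lemma (p : ℕ → Polynomial ℝ) (hdeg : ∀ n, (p n).degree = n) :
    ∀ (n : ℕ) (q : Polynomial ℝ), q.degree < n →
      ∃ c : ℕ → ℝ, q = ∑ i ∈ Finset.range n, c i • p i := by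
  intro n
  induction n with
  | zero =>
    intro q hq
    refine ⟨0, ?_⟩
    simp only [Nat.cast_zero, Nat.WithBot.lt_zero_iff] at hq
    simp [Polynomial.degree_eq_bot.mp hq]
  | succ n ih =>
    intro q hq
    by_cases h : q.degree < n
    · obtain ⟨c, hc⟩ := ih q h
      refine ⟨Function.update c n 0, ?_⟩
      rw [Finset.sum_range_succ, Function.update_self, zero_smul, add_zero, hc]
      refine Finset.sum_congr rfl fun i hi => ?_
      rw [Function.update_of_ne (Finset.mem_range.mp hi).ne]
    · have hne : p n ≠ 0 := fun h0 => by
        have hd := hdeg n; rw [h0, degree_zero] at hd; exact absurd hd (by simp)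
      have hnat : (p n).natDegree = n := natDegree_eq_of_degree_eq_some (hdeg n)
      have hpn : (p n).coeff n ≠ 0 := by
        have hl : (p n).coeff n = (p n).leadingCoeff := by rw [leadingCoeff, hnat]
        rw [hl]
        exact mt leadingCoeff_eq_zero.mp hne
      set d : ℝ := q.coeff n / (p n).coeff n with hdd
      have hr : (q - d • p n).degree < n := by
        rw [degree_lt_iff_coeff_zero]
        intro m hm
        rcases eq_or_lt_of_le hm with rfl | hm'
        · simp [hdd, div_mul_cancel₀ _ hpn]
        · have h1 : q.coeff m = 0 := by
            have := (degree_lt_iff_coeff_zero q (n + 1)).mp (by exact_mod_cast hq)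
            exact this m hm'
          have h2 : (p n).coeff m = 0 :=
            coeff_eq_zero_of_degree_lt (by rw [hdeg n]; exact_mod_cast hm')
          simp [h1, h2]
      obtain ⟨c, hc⟩ := ih _ hr
      refine ⟨Function.update c n d, ?_⟩
      rw [Finset.sum_range_succ, Function.update_self]
      have : ∑ i ∈ Finset.range n, Function.update c n d i • p i
          = ∑ i ∈ Finset.range n, c i • p i :=
        Finset.sum_congr rfl fun i hi => by
          rw [Function.update_of_ne (Finset.mem_range.mp hi).ne]
      rw [this, ← hc]
      ring

theorem stmt8 (a b : ℝ) (hab : a < b) (N : ℕ) (Ψ : ℕ → ℝ → ℝ) (p : ℕ → Polynomial ℝ)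
    (hdeg : ∀ n, (p n).degree = n)
    (hΨ : ∀ n k, Ψ n k = (p n).eval k * Real.exp k)
    (hortho : ∀ m n, (∫ k in Set.Ioo a b, Ψ m k * Ψ n k) = if m = n then (1 : ℝ) else 0)
    (S : Matrix (Fin N) (Fin N) ℝ)
    (hS : ∀ m n : Fin N, S m n = ∫ k in Set.Ioo a b, deriv (Ψ n) k * Ψ m k) :
    (∀ m n : Fin N, (n : ℕ) < (m : ℕ) → S m n = 0) ∧ (∀ n : Fin N, S n n = 1) ∧
      S.det = 1 ∧ IsUnit S := by
  -- Ψ n as a function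
  have hΨfun : ∀ n, Ψ n = fun k => (p n).eval k * Real.exp k := fun n => funext (hΨ n)
  have hΨcont : ∀ n, Continuous (Ψ n) := fun n => by
    rw [hΨfun n]; exact ((p n).continuous_aeval).mul Real.continuous_exp
  -- derivative formula
  have hderiv : ∀ n k, deriv (Ψ n) k
      = (p n).eval k * Real.exp k + (p n).derivative.eval k * Real.exp k := by
    intro n k
    rw [hΨfun n]
    have h := ((p n).hasDerivAt k).mul (Real.hasDerivAt_exp k)
    rw [show (fun k => (p n).eval k * Real.exp k) = (fun x => (p n).eval x) * Real.exp from rfl, h.deriv]; ring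
  have hne : ∀ n : ℕ, p n ≠ 0 := fun n h0 => by
    have hd := hdeg n; rw [h0, Polynomial.degree_zero] at hd; exact absurd hd (by simp)
  have hlt : ∀ n : ℕ, ((p n).derivative).degree < (n : ℕ) := fun n => by
    rw [← hdeg n]; exact Polynomial.degree_derivative_lt (hne n)
  obtain ⟨c, hcrep⟩ : ∃ c : ℕ → ℕ → ℝ,
      ∀ n : ℕ, (p n).derivative = ∑ i ∈ Finset.range n, c n i • p i := by
    choose c hc using fun n : ℕ => rep_lemma p hdeg n (p n).derivative (hlt n)
    exact ⟨c, hc⟩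
  -- key computation of S m n
  have key : ∀ m n : Fin N, S m n = (if (n : ℕ) = (m : ℕ) then (1 : ℝ) else 0)
      + ∑ i ∈ Finset.range n, c n i * (if i = (m : ℕ) then (1 : ℝ) else 0) := by
    intro m n
    have hrep : (p (n : ℕ)).derivative = ∑ i ∈ Finset.range n, c n i • p i := hcrep n
    -- pointwise identity
    have hpt : ∀ k, deriv (Ψ (n : ℕ)) k * Ψ m k
        = Ψ n k * Ψ m k + ∑ i ∈ Finset.range n, c (n:ℕ) i * (Ψ i k * Ψ m k) := by
      intro k
      rw [hderiv n k, hΨ n k]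
      have : (p (n : ℕ)).derivative.eval k = ∑ i ∈ Finset.range n, c (n:ℕ) i * (p i).eval k := by
        rw [hrep]; simp [Polynomial.eval_finset_sum]
      rw [this]
      simp only [hΨ]
      simp only [add_mul, Finset.sum_mul, mul_assoc]
    have hint : ∀ j : ℕ, IntegrableOn (fun k => Ψ j k * Ψ m k) (Set.Ioo a b) := by
      intro j
      exact (((hΨcont j).mul (hΨcont m)).integrableOn_Icc).mono_set Set.Ioo_subset_Icc_self
    rw [hS m n]
    calc (∫ k in Set.Ioo a b, deriv (Ψ (n:ℕ)) k * Ψ m k)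
        = ∫ k in Set.Ioo a b,
            (Ψ n k * Ψ m k + ∑ i ∈ Finset.range n, c (n:ℕ) i * (Ψ i k * Ψ m k)) := by
          exact integral_congr_ae (Filter.Eventually.of_forall fun k => hpt k)
      _ = (∫ k in Set.Ioo a b, Ψ n k * Ψ m k)
            + ∫ k in Set.Ioo a b, ∑ i ∈ Finset.range n, c (n:ℕ) i * (Ψ i k * Ψ m k) := by
          refine integral_add (hint n) ?_
          exact integrable_finset_sum _ fun i _ => (hint i).const_mul _
      _ = (∫ k in Set.Ioo a b, Ψ n k * Ψ m k)
            + ∑ i ∈ Finset.range n, c (n:ℕ) i * ∫ k in Set.Ioo a b, Ψ i k * Ψ m k := by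
          congr 1
          rw [integral_finset_sum _ fun i _ => (hint i).const_mul _]
          exact Finset.sum_congr rfl fun i _ => integral_const_mul _ _
      _ = (if (n:ℕ) = (m:ℕ) then (1:ℝ) else 0)
            + ∑ i ∈ Finset.range n, c (n:ℕ) i * (if i = (m:ℕ) then (1:ℝ) else 0) := by
          rw [hortho n m]
          congr 1
          exact Finset.sum_congr rfl fun i _ => by rw [hortho i m]
  have h1 : ∀ m n : Fin N, (n : ℕ) < (m : ℕ) → S m n = 0 := by
    intro m n hnm
    rw [key m n, if_neg (by omega)]
    rw [Finset.sum_eq_zero fun i hi => by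
      rw [if_neg (by have := Finset.mem_range.mp hi; omega), mul_zero]]
    ring
  have h2 : ∀ n : Fin N, S n n = 1 := by
    intro n
    rw [key n n, if_pos rfl]
    rw [Finset.sum_eq_zero fun i hi => by
      rw [if_neg (by have := Finset.mem_range.mp hi; omega), mul_zero]]
    ring
  have hdet : S.det = 1 := by
    have hBT : S.BlockTriangular id := fun i j hij => h1 i j hij
    rw [Matrix.det_of_upperTriangular hBT]
    simp [h2]
  exact ⟨h1, h2, hdet, (Matrix.isUnit_iff_isUnit_det S).mpr (by rw [hdet]; exact isUnit_one)⟩
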